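/- Local GD with constant stepsize 0 < γ ≤ 1/(4LH) satisfies f(x̄_T) − f(x_*) ≤ 2‖x_0 − x_*‖²/(γT) + 24γ²σ²H²L, where x̄_T = (1/T) Σ_{t=0}^{T−1} x̂_t and T is a synchronization time. -/

import Mathlib

/-!
The averaged iterate `x̂_t` performs gradient descent on `f = (1/M) Σ f_m` with the averaged
local gradient, so the standard one-step analysis gives
`‖x̂_{t+1} - x⋆‖² ≤ ‖x̂_t - x⋆‖² - 2γ (f(x̂_t) - f(x⋆)) + γ L V_t`,
where `V_t` is the dispersion of the local iterates around their mean. Inside an epoch the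
local iterates drift apart only through the dispersion of the local gradients, which
cocoercivity bounds by `8L (f(x̂_t) - f(x⋆)) + 4L² V_t + 2σ²`. Since epochs have length at most
`H`, `Σ V_t ≤ γ² H² Σ (gradient dispersion)`, and as `4γ²H²L² ≤ 1/4` the `V` terms on the right
are absorbed into the left. Telescoping the one-step inequality and Jensen's inequality for the
time average finish the proof.
-/

open Finset RealInnerProductSpace

noncomputable def avgV {d M : ℕ} (x : Fin M → EuclideanSpace ℝ (Fin d)) :
    EuclideanSpace ℝ (Fin d) := (1 / (M : ℝ)) • ∑ m, x m

noncomputable def avgR {M : ℕ} (a : Fin M → ℝ) : ℝ := (1 / (M : ℝ)) * ∑ m, a m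

theorem norm_sum_sq_le_card_mul {ι E : Type*} [SeminormedAddCommGroup E] (s : Finset ι)
    (v : ι → E) : ‖∑ i ∈ s, v i‖ ^ 2 ≤ #s * ∑ i ∈ s, ‖v i‖ ^ 2 :=
  (pow_le_pow_left₀ (norm_nonneg _) (norm_sum_le s v) 2).trans sq_sum_le_card_mul_sum_sq

theorem ConvexOn.map_inv_card_smul_sum_le {E : Type*} [AddCommGroup E] [Module ℝ E]
    {f : E → ℝ} {t : Set E} (hf : ConvexOn ℝ t f) {ι : Type*} {s : Finset ι} (hs : s.Nonempty)
    {y : ι → E} (hy : ∀ i ∈ s, y i ∈ t) :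
    f ((#s : ℝ)⁻¹ • ∑ i ∈ s, y i) ≤ (#s : ℝ)⁻¹ * ∑ i ∈ s, f (y i) := by
  have hcard : (0 : ℝ) < #s := by exact_mod_cast hs.card_pos
  have h := hf.map_sum_le (t := s) (w := fun _ => (#s : ℝ)⁻¹) (fun _ _ => by positivity)
    (by simp [hcard.ne']) hy
  simpa only [← smul_sum, smul_eq_mul, ← mul_sum] using h

section ConvexSmooth

variable {E : Type*} [NormedAddCommGroup E] [InnerProductSpace ℝ E]

def bregman (f : E → ℝ) (g : E → E) (x y : E) : ℝ := f x - f y - ⟪g y, x - y⟫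

/-- `f` is convex and `L`-smooth, with gradient `g`. -/
def ConvexSmooth (L : ℝ) (f : E → ℝ) (g : E → E) : Prop :=
  ∀ x y, 0 ≤ bregman f g x y ∧ bregman f g x y ≤ L / 2 * ‖x - y‖ ^ 2

variable {L : ℝ} {f : E → ℝ} {g : E → E}

lemma half_mul_norm_inv_smul_sq (L : ℝ) (v : E) :
    L / 2 * ‖L⁻¹ • v‖ ^ 2 = (2 * L)⁻¹ * ‖v‖ ^ 2 := by
  rw [norm_smul, mul_pow, Real.norm_eq_abs, sq_abs]
  rcases eq_or_ne L 0 with rfl | hL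
  · simp
  · field_simp

theorem ConvexSmooth.norm_grad_sub_sq_le (hf : ConvexSmooth L f g) (hL : 0 < L) (x y : E) :
    ‖g x - g y‖ ^ 2 ≤ 2 * L * bregman f g x y := by
  set Δ := g x - g y
  set z := x - L⁻¹ • Δ
  have hsplit : bregman f g x y =
      bregman f g z y - bregman f g z x + L⁻¹ * ‖Δ‖ ^ 2 := by
    simp only [bregman, z, Δ, inner_sub_right, inner_smul_right, real_inner_self_eq_norm_sq,
      norm_sub_sq_real, real_inner_comm (g x) (g y)]
    ring
  have hzx : ‖z - x‖ ^ 2 = ‖L⁻¹ • Δ‖ ^ 2 := by simp [z]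
  have h1 := (hf z y).1
  have h2 := (hf z x).2
  rw [hzx, half_mul_norm_inv_smul_sq L] at h2
  have hhalf : L⁻¹ * ‖Δ‖ ^ 2 = 2 * ((2 * L)⁻¹ * ‖Δ‖ ^ 2) := by field_simp
  have hB : (2 * L)⁻¹ * ‖Δ‖ ^ 2 ≤ bregman f g x y := by linarith
  calc ‖Δ‖ ^ 2 = 2 * L * ((2 * L)⁻¹ * ‖Δ‖ ^ 2) := by field_simp
    _ ≤ 2 * L * bregman f g x y := by gcongr

theorem ConvexSmooth.inv_mul_norm_grad_sub_sq_le (hf : ConvexSmooth L f g) (hL : 0 < L)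
    (x y : E) : (2 * L)⁻¹ * ‖g x - g y‖ ^ 2 ≤ bregman f g x y := by
  rw [inv_mul_le_iff₀ (by positivity)]
  exact hf.norm_grad_sub_sq_le hL x y

theorem ConvexSmooth.grad_eq_zero_of_forall_le (hf : ConvexSmooth L f g) (hL : 0 < L) {x : E}
    (hx : ∀ y, f x ≤ f y) : g x = 0 := by
  have h := (hf (x - L⁻¹ • g x) x).2
  have hmin := hx (x - L⁻¹ • g x)
  simp only [bregman, sub_sub_cancel_left, norm_neg, inner_neg_right, inner_smul_right,
    real_inner_self_eq_norm_sq, half_mul_norm_inv_smul_sq L] at h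
  have hhalf : L⁻¹ * ‖g x‖ ^ 2 = 2 * ((2 * L)⁻¹ * ‖g x‖ ^ 2) := by field_simp
  have hnorm : (2 * L)⁻¹ * ‖g x‖ ^ 2 ≤ 0 := by linarith
  simpa using nonpos_of_mul_nonpos_right hnorm (by positivity)

theorem convexOn_univ_of_bregman_nonneg (h : ∀ x y, 0 ≤ bregman f g x y) :
    ConvexOn ℝ Set.univ f := by
  refine ⟨convex_univ, fun x _ y _ a b ha hb hab => ?_⟩
  set z := a • x + b • y
  have hx := h x z
  have hy := h y z
  have hcomb : a • (x - z) + b • (y - z) = 0 := by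
    rw [smul_sub, smul_sub, sub_add_sub_comm, ← add_smul, hab, one_smul, sub_self]
  have hinner : a * ⟪g z, x - z⟫ + b * ⟪g z, y - z⟫ = 0 := by
    rw [← inner_smul_right, ← inner_smul_right, ← inner_add_right, hcomb, inner_zero_right]
  have hfz : f z = a * f z + b * f z := by rw [← add_mul, hab, one_mul]
  simp only [bregman, smul_eq_mul] at hx hy ⊢
  nlinarith [mul_nonneg ha hx, mul_nonneg hb hy]

theorem ConvexSmooth.sub_sub_norm_sq_le_inner (hf : ConvexSmooth L f g) (hL : 0 < L)
    (y z w : E) :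
    f z - f w - L / 2 * ‖y - z‖ ^ 2 + (2 * L)⁻¹ * ‖g y - g w‖ ^ 2 ≤ ⟪g y, z - w⟫ := by
  have hsmooth := (hf z y).2
  have hcoco := hf.inv_mul_norm_grad_sub_sq_le hL w y
  rw [norm_sub_rev (g w)] at hcoco
  rw [norm_sub_rev] at hsmooth
  have : ⟪g y, z - w⟫ = ⟪g y, z - y⟫ - ⟪g y, w - y⟫ := by
    rw [← inner_sub_right, sub_sub_sub_cancel_right]
  simp only [bregman] at hsmooth hcoco
  linarith

theorem real_inner_le_inv_mul_norm_sq_add (hL : 0 < L) (a b : E) :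
    ⟪a, b⟫ ≤ (2 * L)⁻¹ * ‖a‖ ^ 2 + L / 2 * ‖b‖ ^ 2 := by
  have h := norm_sub_sq_real a (L • b)
  rw [inner_smul_right, norm_smul, Real.norm_of_nonneg hL.le] at h
  rw [← sub_nonneg]
  have : (2 * L)⁻¹ * ‖a‖ ^ 2 + L / 2 * ‖b‖ ^ 2 - ⟪a, b⟫ = (2 * L)⁻¹ * ‖a - L • b‖ ^ 2 := by
    rw [h]; field_simp; ring
  rw [this]; positivity

theorem ConvexSmooth.bregman_le_two_mul_bregman_add (hf : ConvexSmooth L f g) (hL : 0 < L)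
    (y z w : E) : bregman f g y w ≤ 2 * bregman f g z w + L * ‖y - z‖ ^ 2 := by
  have hsmooth := (hf y z).2
  have hcoco := hf.inv_mul_norm_grad_sub_sq_le hL z w
  have hyoung := real_inner_le_inv_mul_norm_sq_add hL (g z - g w) (y - z)
  have : bregman f g y w = bregman f g y z + bregman f g z w + ⟪g z - g w, y - z⟫ := by
    simp only [bregman, inner_sub_left, inner_sub_right]; ring
  linarith

end ConvexSmooth

section Average

variable {d M : ℕ}

lemma avgR_nonneg {a : Fin M → ℝ} (h : ∀ m, 0 ≤ a m) : 0 ≤ avgR a :=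
  mul_nonneg (by positivity) (sum_nonneg fun m _ => h m)

lemma avgR_mono {a b : Fin M → ℝ} (h : ∀ m, a m ≤ b m) : avgR a ≤ avgR b :=
  mul_le_mul_of_nonneg_left (sum_le_sum fun m _ => h m) (by positivity)

lemma avgR_add (a b : Fin M → ℝ) : (avgR fun m => a m + b m) = avgR a + avgR b := by
  simp only [avgR, sum_add_distrib, mul_add]

lemma avgR_sub (a b : Fin M → ℝ) : (avgR fun m => a m - b m) = avgR a - avgR b := by
  simp only [avgR, sum_sub_distrib, mul_sub]

lemma avgR_const_mul (c : ℝ) (a : Fin M → ℝ) : (avgR fun m => c * a m) = c * avgR a := by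
  simp only [avgR, ← mul_sum]; ring

lemma avgR_const (hM : 0 < M) (c : ℝ) : (avgR fun _ : Fin M => c) = c := by
  simp only [avgR, sum_const, card_univ, Fintype.card_fin, nsmul_eq_mul]
  field_simp

lemma avgR_sum_comm {ι : Type*} (s : Finset ι) (a : Fin M → ι → ℝ) :
    (avgR fun m => ∑ i ∈ s, a m i) = ∑ i ∈ s, avgR fun m => a m i := by
  simp only [avgR, sum_comm (s := univ), mul_sum]

lemma inner_avgV_left (v : Fin M → EuclideanSpace ℝ (Fin d)) (w : EuclideanSpace ℝ (Fin d)) :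
    ⟪avgV v, w⟫ = avgR fun m => ⟪v m, w⟫ := by
  rw [avgV, avgR, real_inner_smul_left, sum_inner]

lemma avgV_sub (u v : Fin M → EuclideanSpace ℝ (Fin d)) :
    (avgV fun m => u m - v m) = avgV u - avgV v := by
  simp only [avgV, sum_sub_distrib, smul_sub]

lemma avgV_smul (c : ℝ) (v : Fin M → EuclideanSpace ℝ (Fin d)) :
    (avgV fun m => c • v m) = c • avgV v := by
  simp only [avgV, ← smul_sum, smul_comm c]

lemma avgV_const (hM : 0 < M) (c : EuclideanSpace ℝ (Fin d)) :
    (avgV fun _ : Fin M => c) = c := by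
  rw [avgV, sum_const, card_univ, Fintype.card_fin, ← Nat.cast_smul_eq_nsmul ℝ, smul_smul]
  field_simp
  exact one_smul ℝ c

noncomputable def dispersion (v : Fin M → EuclideanSpace ℝ (Fin d)) : ℝ :=
  avgR fun m => ‖v m - avgV v‖ ^ 2

lemma dispersion_nonneg (v : Fin M → EuclideanSpace ℝ (Fin d)) : 0 ≤ dispersion v :=
  avgR_nonneg fun _ => sq_nonneg _

lemma dispersion_add_norm_avgV_sq (hM : 0 < M) (v : Fin M → EuclideanSpace ℝ (Fin d)) :
    dispersion v + ‖avgV v‖ ^ 2 = avgR fun m => ‖v m‖ ^ 2 := by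
  simp only [dispersion, norm_sub_sq_real, avgR_add, avgR_sub, avgR_const_mul, avgR_const hM,
    ← inner_avgV_left, real_inner_self_eq_norm_sq]
  ring

lemma dispersion_le (hM : 0 < M) (v : Fin M → EuclideanSpace ℝ (Fin d)) :
    dispersion v ≤ avgR fun m => ‖v m‖ ^ 2 := by
  linarith [dispersion_add_norm_avgV_sq hM v, sq_nonneg ‖avgV v‖]

lemma norm_avgV_sq_le (hM : 0 < M) (v : Fin M → EuclideanSpace ℝ (Fin d)) :
    ‖avgV v‖ ^ 2 ≤ avgR fun m => ‖v m‖ ^ 2 := by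
  linarith [dispersion_add_norm_avgV_sq hM v, dispersion_nonneg v]

variable {L : ℝ} {f : Fin M → EuclideanSpace ℝ (Fin d) → ℝ}
  {g : Fin M → EuclideanSpace ℝ (Fin d) → EuclideanSpace ℝ (Fin d)}

lemma avgR_bregman (x y : EuclideanSpace ℝ (Fin d)) :
    (avgR fun m => bregman (f m) (g m) x y) =
      bregman (fun z => avgR fun m => f m z) (fun z => avgV fun m => g m z) x y := by
  simp only [bregman, avgR_sub, inner_avgV_left]

theorem ConvexSmooth.avg (hM : 0 < M) (hf : ∀ m, ConvexSmooth L (f m) (g m)) :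
    ConvexSmooth L (fun z => avgR fun m => f m z) (fun z => avgV fun m => g m z) := by
  intro x y
  rw [← avgR_bregman]
  exact ⟨avgR_nonneg fun m => (hf m x y).1,
    (avgR_mono fun m => (hf m x y).2).trans_eq (avgR_const hM _)⟩

end Average

section Configuration

variable {d M : ℕ} {L : ℝ} {f : Fin M → EuclideanSpace ℝ (Fin d) → ℝ}
  {g : Fin M → EuclideanSpace ℝ (Fin d) → EuclideanSpace ℝ (Fin d)}
  {xstar : EuclideanSpace ℝ (Fin d)}

theorem avgR_bregman_le (hL : 0 < L) (hf : ∀ m, ConvexSmooth L (f m) (g m))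
    (hgstar : (avgV fun m => g m xstar) = 0) (v : Fin M → EuclideanSpace ℝ (Fin d)) :
    (avgR fun m => bregman (f m) (g m) (v m) xstar) ≤
      2 * ((avgR fun m => f m (avgV v)) - avgR fun m => f m xstar) + L * dispersion v := by
  calc (avgR fun m => bregman (f m) (g m) (v m) xstar)
      ≤ avgR fun m => 2 * bregman (f m) (g m) (avgV v) xstar + L * ‖v m - avgV v‖ ^ 2 :=
        avgR_mono fun m => (hf m).bregman_le_two_mul_bregman_add hL _ _ _
    _ = _ := by
        rw [avgR_add, avgR_const_mul, avgR_const_mul, avgR_bregman, bregman, hgstar,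
          inner_zero_left, sub_zero, dispersion]

theorem dispersion_grad_le (hM : 0 < M) (hL : 0 < L) (hf : ∀ m, ConvexSmooth L (f m) (g m))
    (hgstar : (avgV fun m => g m xstar) = 0) (v : Fin M → EuclideanSpace ℝ (Fin d)) :
    dispersion (fun m => g m (v m)) ≤
      8 * L * ((avgR fun m => f m (avgV v)) - avgR fun m => f m xstar)
        + 4 * L ^ 2 * dispersion v + 2 * avgR fun m => ‖g m xstar‖ ^ 2 := by
  have hsplit : ∀ a b : EuclideanSpace ℝ (Fin d),
      ‖a‖ ^ 2 ≤ 2 * ‖a - b‖ ^ 2 + 2 * ‖b‖ ^ 2 := by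
    intro a b
    have h := parallelogram_law_with_norm ℝ (a - b) b
    rw [sub_add_cancel] at h
    nlinarith [sq_nonneg ‖a - b - b‖]
  have hbreg := avgR_bregman_le hL hf hgstar v
  calc dispersion (fun m => g m (v m))
      ≤ avgR fun m => ‖g m (v m)‖ ^ 2 := dispersion_le hM _
    _ ≤ avgR fun m => 2 * (2 * L * bregman (f m) (g m) (v m) xstar) + 2 * ‖g m xstar‖ ^ 2 :=
        avgR_mono fun m => (hsplit _ (g m xstar)).trans <| by
          gcongr; exact (hf m).norm_grad_sub_sq_le hL _ _
    _ = 4 * L * avgR (fun m => bregman (f m) (g m) (v m) xstar)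
          + 2 * avgR fun m => ‖g m xstar‖ ^ 2 := by
        rw [avgR_add, avgR_const_mul, avgR_const_mul, avgR_const_mul]; ring
    _ ≤ _ := by nlinarith

theorem norm_avgV_sub_smul_sub_sq_le (hM : 0 < M) (hL : 0 < L)
    (hf : ∀ m, ConvexSmooth L (f m) (g m)) (hgstar : (avgV fun m => g m xstar) = 0)
    {γ : ℝ} (hγ0 : 0 ≤ γ) (hγ : γ * L ≤ 1) (v : Fin M → EuclideanSpace ℝ (Fin d)) :
    ‖avgV v - γ • (avgV fun m => g m (v m)) - xstar‖ ^ 2 ≤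
      ‖avgV v - xstar‖ ^ 2 - 2 * γ * ((avgR fun m => f m (avgV v)) - avgR fun m => f m xstar)
        + γ * L * dispersion v := by
  set xh := avgV v
  set gb := avgV fun m => g m (v m)
  set Q := avgR fun m => ‖g m (v m) - g m xstar‖ ^ 2
  have hexpand : ‖xh - γ • gb - xstar‖ ^ 2 =
      ‖xh - xstar‖ ^ 2 - 2 * γ * ⟪xh - xstar, gb⟫ + γ ^ 2 * ‖gb‖ ^ 2 := by
    rw [sub_right_comm, norm_sub_sq_real, inner_smul_right, norm_smul,
      Real.norm_of_nonneg hγ0]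
    ring
  have hinner : (avgR fun m => f m xh) - (avgR fun m => f m xstar) - L / 2 * dispersion v
      + (2 * L)⁻¹ * Q ≤ ⟪xh - xstar, gb⟫ := by
    rw [real_inner_comm, inner_avgV_left, dispersion, ← avgR_sub, ← avgR_const_mul,
      ← avgR_sub, ← avgR_const_mul, ← avgR_add]
    exact avgR_mono fun m => (hf m).sub_sub_norm_sq_le_inner hL _ _ _
  have hgb : ‖gb‖ ^ 2 ≤ Q := by
    have : gb = avgV fun m => g m (v m) - g m xstar := by rw [avgV_sub, hgstar, sub_zero]
    rw [this]
    exact norm_avgV_sq_le hM _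
  have hQ : 0 ≤ Q := avgR_nonneg fun _ => sq_nonneg _
  have hγ2 : γ ^ 2 ≤ γ * L⁻¹ := by rw [le_mul_inv_iff₀ hL]; nlinarith
  have hcancel : 2 * γ * ((2 * L)⁻¹ * Q) = γ * L⁻¹ * Q := by field_simp
  rw [hexpand]
  nlinarith [mul_le_mul_of_nonneg_left hinner (by positivity : (0 : ℝ) ≤ 2 * γ),
    mul_le_mul_of_nonneg_left hgb (sq_nonneg γ), mul_le_mul_of_nonneg_right hγ2 hQ]

end Configuration

section LocalGD

variable {d M : ℕ}

structure IsLocalGD (S : ℕ → ℕ) (γ : ℝ)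
    (g : Fin M → EuclideanSpace ℝ (Fin d) → EuclideanSpace ℝ (Fin d))
    (x₀ : EuclideanSpace ℝ (Fin d)) (x : ℕ → Fin M → EuclideanSpace ℝ (Fin d)) : Prop where
  sync_zero : S 0 = 0
  sync_strictMono : StrictMono S
  init : ∀ m, x 0 m = x₀
  step_local : ∀ t m, (∀ q, S q ≠ t + 1) → x (t + 1) m = x t m - γ • g m (x t m)
  step_sync : ∀ t m, (∃ q, S q = t + 1) →
    x (t + 1) m = avgV fun j => x t j - γ • g j (x t j)

variable {S : ℕ → ℕ} {γ : ℝ}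
  {g : Fin M → EuclideanSpace ℝ (Fin d) → EuclideanSpace ℝ (Fin d)}
  {x₀ : EuclideanSpace ℝ (Fin d)} {x : ℕ → Fin M → EuclideanSpace ℝ (Fin d)}

theorem IsLocalGD.avgV_succ (h : IsLocalGD S γ g x₀ x) (hM : 0 < M) (t : ℕ) :
    avgV (x (t + 1)) = avgV (x t) - γ • avgV fun m => g m (x t m) := by
  rw [← avgV_smul, ← avgV_sub]
  by_cases hsync : ∃ q, S q = t + 1
  · rw [show x (t + 1) = fun _ => _ from funext fun m => h.step_sync t m hsync, avgV_const hM]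
  · push Not at hsync
    exact congrArg avgV (funext fun m => h.step_local t m hsync)

theorem IsLocalGD.eq_avgV_sync (h : IsLocalGD S γ g x₀ x) (hM : 0 < M) (q : ℕ)
    (m : Fin M) : x (S q) m = avgV (x (S q)) := by
  obtain ⟨c, hc⟩ : ∃ c, x (S q) = fun _ => c := by
    cases q with
    | zero => exact ⟨x₀, by rw [h.sync_zero]; exact funext h.init⟩
    | succ q =>
      obtain ⟨t, ht⟩ : ∃ t, S (q + 1) = t + 1 :=
        Nat.exists_eq_add_one.2 (h.sync_zero ▸ h.sync_strictMono q.succ_pos)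
      exact ⟨_, by rw [ht]; exact funext fun m => h.step_sync t m ⟨q + 1, ht⟩⟩
  rw [hc, avgV_const hM]

theorem IsLocalGD.sub_avgV_eq_sum (h : IsLocalGD S γ g x₀ x) (hM : 0 < M) {q t : ℕ}
    (hqt : S q ≤ t) (htq : t < S (q + 1)) (m : Fin M) :
    x t m - avgV (x t) = -γ • ∑ s ∈ Ico (S q) t, (g m (x s m) - avgV fun j => g j (x s j)) := by
  induction t, hqt using Nat.le_induction with
  | base => rw [Ico_self, sum_empty, smul_zero, ← h.eq_avgV_sync hM q m, sub_self]
  | succ t hqt ih =>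
    have hlocal : ∀ q', S q' ≠ t + 1 := by
      intro q' hq'
      have h1 : q < q' := h.sync_strictMono.lt_iff_lt.1 (by omega)
      have h2 : q' < q + 1 := h.sync_strictMono.lt_iff_lt.1 (by omega)
      omega
    rw [sum_Ico_succ_top hqt, smul_add, ← ih (by omega), h.step_local t m hlocal,
      h.avgV_succ hM t]
    module

theorem IsLocalGD.dispersion_le_sum_epoch (h : IsLocalGD S γ g x₀ x) (hM : 0 < M)
    {H q t : ℕ} (hgap : S (q + 1) - S q ≤ H) (ht : t ∈ Ico (S q) (S (q + 1))) :
    dispersion (x t) ≤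
      γ ^ 2 * H * ∑ s ∈ Ico (S q) (S (q + 1)), dispersion fun m => g m (x s m) := by
  rw [mem_Ico] at ht
  have hcard : (#(Ico (S q) t) : ℝ) ≤ H := by
    rw [Nat.card_Ico]; exact_mod_cast (by omega : t - S q ≤ H)
  have hsub : Ico (S q) t ⊆ Ico (S q) (S (q + 1)) := Ico_subset_Ico_right ht.2.le
  have hm : ∀ m, ‖x t m - avgV (x t)‖ ^ 2 ≤ γ ^ 2 * H *
      ∑ s ∈ Ico (S q) (S (q + 1)), ‖g m (x s m) - avgV fun j => g j (x s j)‖ ^ 2 := by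
    intro m
    rw [h.sub_avgV_eq_sum hM ht.1 ht.2, norm_smul, mul_pow, norm_neg, Real.norm_eq_abs, sq_abs,
      mul_assoc]
    gcongr
    exact (norm_sum_sq_le_card_mul _ _).trans <| mul_le_mul hcard
      (sum_le_sum_of_subset_of_nonneg hsub fun _ _ _ => sq_nonneg _)
      (sum_nonneg fun _ _ => sq_nonneg _) (Nat.cast_nonneg _)
  calc dispersion (x t) ≤ _ := avgR_mono hm
    _ = _ := by rw [avgR_const_mul, avgR_sum_comm]; rfl

theorem IsLocalGD.sum_range_dispersion_le (h : IsLocalGD S γ g x₀ x) (hM : 0 < M) {H : ℕ}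
    (hgap : ∀ q, S (q + 1) - S q ≤ H) (p : ℕ) :
    ∑ t ∈ range (S p), dispersion (x t) ≤
      γ ^ 2 * H ^ 2 * ∑ t ∈ range (S p), dispersion fun m => g m (x t m) := by
  induction p with
  | zero => simp [h.sync_zero]
  | succ q ih =>
    have hmono : S q ≤ S (q + 1) := (h.sync_strictMono q.lt_succ_self).le
    rw [← sum_range_add_sum_Ico _ hmono, ← sum_range_add_sum_Ico _ hmono, mul_add]
    refine add_le_add ih ?_
    calc ∑ t ∈ Ico (S q) (S (q + 1)), dispersion (x t)
        ≤ ∑ _t ∈ Ico (S q) (S (q + 1)),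
            γ ^ 2 * H * ∑ s ∈ Ico (S q) (S (q + 1)), dispersion fun m => g m (x s m) :=
          sum_le_sum fun t ht => h.dispersion_le_sum_epoch hM (hgap q) ht
      _ ≤ H * (γ ^ 2 * H *
            ∑ s ∈ Ico (S q) (S (q + 1)), dispersion fun m => g m (x s m)) := by
          rw [sum_const, nsmul_eq_mul, Nat.card_Ico]
          gcongr
          · exact mul_nonneg (by positivity) (sum_nonneg fun _ _ => dispersion_nonneg _)
          · exact_mod_cast hgap q
      _ = _ := by ring

end LocalGD

theorem mul_sum_sub_le_of_local_gd_recursions {r F V W : ℕ → ℝ} {γ L H σ Fstar : ℝ} {T : ℕ}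
    (hL : 0 < L) (hH : 0 ≤ H) (hγ0 : 0 < γ) (hγ : 4 * γ * L * H ≤ 1)
    (hr : ∀ t, 0 ≤ r t) (hF : ∀ t, Fstar ≤ F t) (hV : ∀ t, 0 ≤ V t)
    (hdesc : ∀ t, r (t + 1) ≤ r t - 2 * γ * (F t - Fstar) + γ * L * V t)
    (hW : ∀ t, W t ≤ 8 * L * (F t - Fstar) + 4 * L ^ 2 * V t + 2 * σ)
    (hVW : ∑ t ∈ range T, V t ≤ γ ^ 2 * H ^ 2 * ∑ t ∈ range T, W t) :
    γ * ∑ t ∈ range T, (F t - Fstar) ≤ 3 / 4 * r 0 + 2 * γ ^ 3 * L * H ^ 2 * σ * T := by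
  set A := ∑ t ∈ range T, (F t - Fstar)
  set B := ∑ t ∈ range T, V t
  have hA0 : 0 ≤ A := sum_nonneg fun t _ => sub_nonneg.2 (hF t)
  have hB0 : 0 ≤ B := sum_nonneg fun t _ => hV t
  have htel : r T - r 0 ≤ -2 * γ * A + γ * L * B := by
    rw [← sum_range_sub, mul_sum, mul_sum, ← sum_add_distrib]
    exact sum_le_sum fun t _ => by linarith [hdesc t]
  have hWsum : ∑ t ∈ range T, W t ≤ 8 * L * A + 4 * L ^ 2 * B + 2 * σ * T := by
    calc ∑ t ∈ range T, W t
        ≤ ∑ t ∈ range T, (8 * L * (F t - Fstar) + 4 * L ^ 2 * V t + 2 * σ) :=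
          sum_le_sum fun t _ => hW t
      _ = _ := by
          simp only [A, B, sum_add_distrib, ← mul_sum, sum_const, card_range, nsmul_eq_mul]; ring
  have h16 : γ ^ 2 * H ^ 2 * L ^ 2 ≤ 1 / 16 := by
    have : 0 ≤ γ * L * H := by positivity
    nlinarith
  have hB : B ≤ 32 / 3 * γ ^ 2 * H ^ 2 * L * A + 8 / 3 * γ ^ 2 * H ^ 2 * σ * T := by
    nlinarith [mul_le_mul_of_nonneg_left hWsum (by positivity : 0 ≤ γ ^ 2 * H ^ 2),
      mul_le_mul_of_nonneg_right h16 hB0]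
  nlinarith [hr T, mul_le_mul_of_nonneg_left hB (by positivity : 0 ≤ γ * L),
    mul_le_mul_of_nonneg_right (mul_le_mul_of_nonneg_left h16 hγ0.le) hA0]

theorem le_of_local_gd_recursions {r F V W : ℕ → ℝ} {γ L H σ Fbar Fstar : ℝ} {T : ℕ}
    (hT : 0 < T) (hL : 0 < L) (hH : 0 ≤ H) (hγ0 : 0 < γ) (hγ : 4 * γ * L * H ≤ 1)
    (hr : ∀ t, 0 ≤ r t) (hF : ∀ t, Fstar ≤ F t) (hV : ∀ t, 0 ≤ V t) (hσ : 0 ≤ σ)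
    (hdesc : ∀ t, r (t + 1) ≤ r t - 2 * γ * (F t - Fstar) + γ * L * V t)
    (hW : ∀ t, W t ≤ 8 * L * (F t - Fstar) + 4 * L ^ 2 * V t + 2 * σ)
    (hVW : ∑ t ∈ range T, V t ≤ γ ^ 2 * H ^ 2 * ∑ t ∈ range T, W t)
    (hJ : Fbar ≤ (T : ℝ)⁻¹ * ∑ t ∈ range T, F t) :
    Fbar - Fstar ≤ 2 * r 0 / (γ * T) + 24 * γ ^ 2 * σ * H ^ 2 * L := by
  have hTpos : (0 : ℝ) < T := by exact_mod_cast hT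
  have hsum := mul_sum_sub_le_of_local_gd_recursions hL hH hγ0 hγ hr hF hV hdesc hW hVW
  have hJ' : Fbar - Fstar ≤ (T : ℝ)⁻¹ * ∑ t ∈ range T, (F t - Fstar) := by
    rw [sum_sub_distrib, sum_const, card_range, nsmul_eq_mul, mul_sub,
      inv_mul_cancel_left₀ hTpos.ne']
    exact sub_le_sub_right hJ _
  calc Fbar - Fstar ≤ (T : ℝ)⁻¹ * ∑ t ∈ range T, (F t - Fstar) := hJ'
    _ ≤ (3 / 4 * r 0 + 2 * γ ^ 3 * L * H ^ 2 * σ * T) / (γ * T) := by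
        rw [le_div_iff₀ (by positivity)]
        calc (T : ℝ)⁻¹ * (∑ t ∈ range T, (F t - Fstar)) * (γ * T)
            = γ * ∑ t ∈ range T, (F t - Fstar) := by field_simp
          _ ≤ _ := hsum
    _ = 3 / 4 * r 0 / (γ * T) + 2 * γ ^ 2 * σ * H ^ 2 * L := by field_simp
    _ ≤ 2 * r 0 / (γ * T) + 24 * γ ^ 2 * σ * H ^ 2 * L := by
        have := hr 0
        gcongr <;> norm_num

/-- Theorem 1: Local GD with sync times `S` (gaps at most `H`)
and constant stepsize `0 < γ ≤ 1/(4LH)` satisfies, for any synchronization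
time `T = S p > 0`:
`f(x̄_T) − f(x⋆) ≤ 2‖x₀ − x⋆‖²/(γT) + 24γ²σ²H²L`,
where `x̄_T = (1/T) ∑_{t=0}^{T−1} x̂_t` and `σ² = (1/M) ∑_m ‖∇f_m(x⋆)‖²`. -/
theorem local_gd_convergence {d M : ℕ} (hM : 0 < M) (L γ : ℝ) (hL : 0 < L)
    (f : Fin M → EuclideanSpace ℝ (Fin d) → ℝ)
    (g : Fin M → EuclideanSpace ℝ (Fin d) → EuclideanSpace ℝ (Fin d))
    (hsc : ∀ m x y, 0 ≤ f m x - f m y - ⟪g m y, x - y⟫ ∧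
      f m x - f m y - ⟪g m y, x - y⟫ ≤ L / 2 * ‖x - y‖ ^ 2)
    (xstar : EuclideanSpace ℝ (Fin d))
    (hmin : ∀ y, avgR (fun m => f m xstar) ≤ avgR (fun m => f m y))
    (S : ℕ → ℕ) (H : ℕ) (hH1 : 1 ≤ H) (hS0 : S 0 = 0) (hSmono : StrictMono S)
    (hgap : ∀ q, S (q + 1) - S q ≤ H)
    (hγ0 : 0 < γ) (hγ : γ ≤ 1 / (4 * L * H))
    (x₀ : EuclideanSpace ℝ (Fin d))
    (x : ℕ → Fin M → EuclideanSpace ℝ (Fin d))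
    (hx0 : ∀ m, x 0 m = x₀)
    (hstep : ∀ t m, (∀ q, S q ≠ t + 1) →
      x (t + 1) m = x t m - γ • g m (x t m))
    (hsync : ∀ t m, (∃ q, S q = t + 1) →
      x (t + 1) m = avgV (fun j => x t j - γ • g j (x t j)))
    (T p : ℕ) (hT : T = S p) (hTpos : 0 < T) :
    avgR (fun m => f m ((1 / (T : ℝ)) • ∑ t ∈ Finset.range T, avgV (x t)))
      - avgR (fun m => f m xstar) ≤
      2 * ‖x₀ - xstar‖ ^ 2 / (γ * T)
      + 24 * γ ^ 2 * avgR (fun m => ‖g m xstar‖ ^ 2) * H ^ 2 * L := by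
  have hf : ∀ m, ConvexSmooth L (f m) (g m) := hsc
  have hF := ConvexSmooth.avg hM hf
  have hgstar : (avgV fun m => g m xstar) = 0 := hF.grad_eq_zero_of_forall_le hL hmin
  have hgd : IsLocalGD S γ g x₀ x := ⟨hS0, hSmono, hx0, hstep, hsync⟩
  have hγLH : 4 * γ * L * H ≤ 1 := by
    rw [le_div_iff₀ (by positivity)] at hγ; linarith
  have hγL : γ * L ≤ 1 := by
    have : (1 : ℝ) ≤ H := by exact_mod_cast hH1
    nlinarith [mul_pos hγ0 hL]
  have hjensen := (convexOn_univ_of_bregman_nonneg fun y z => (hF y z).1).map_inv_card_smul_sum_le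
    (nonempty_range_iff.2 hTpos.ne') (y := fun t => avgV (x t)) fun _ _ => Set.mem_univ _
  rw [card_range] at hjensen
  have hx0avg : avgV (x 0) = x₀ := by rw [show x 0 = fun _ => x₀ from funext hx0, avgV_const hM]
  rw [← hx0avg, one_div]
  exact le_of_local_gd_recursions (r := fun t => ‖avgV (x t) - xstar‖ ^ 2)
    (V := fun t => dispersion (x t)) (W := fun t => dispersion fun m => g m (x t m))
    hTpos hL (Nat.cast_nonneg H) hγ0 hγLH (fun _ => sq_nonneg _) (fun _ => hmin _)
    (fun _ => dispersion_nonneg _) (avgR_nonneg fun _ => sq_nonneg _)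
    (fun t => by
      rw [hgd.avgV_succ hM t]
      exact norm_avgV_sub_smul_sub_sq_le hM hL hf hgstar hγ0.le hγL (x t))
    (fun t => dispersion_grad_le hM hL hf hgstar (x t))
    (hT ▸ hgd.sum_range_dispersion_le hM hgap p) hjensen
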